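/- Let A be the 3-dimensional complex 3-Lie algebra with [e1,e2,e3] = e1, and let T be the linear map whose matrix is O_2: T(e1) = a11 e1, T(e2) = a21 e1 − a33 e2 + a23 e3, T(e3) = a31 e1 + a32 e2 + a33 e3, for arbitrary complex parameters a11, a21, a23, a31, a32, a33. Then T is an O-operator with respect to the adjoint representation. -/

import Mathlib

open Finset

/-- The standard basis of `ℂ³`: `e 0 = e₁`, `e 1 = e₂`, `e 2 = e₃`. -/
def e (i : Fin 3) : Fin 3 → ℂ := fun j => if j = i then 1 else 0

/-- The trilinear skew-symmetric bracket on `ℂ³` determined by `[e₁,e₂,e₃] = e₁`. -/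
def br (x y z : Fin 3 → ℂ) : Fin 3 → ℂ := fun i =>
  if i = 0 then
    x 0 * (y 1 * z 2 - y 2 * z 1) - x 1 * (y 0 * z 2 - y 2 * z 0)
      + x 2 * (y 0 * z 1 - y 1 * z 0)
  else 0

/-- `T` is an `𝒪`-operator with respect to the adjoint representation. -/
def IsOOperator (T : (Fin 3 → ℂ) →ₗ[ℂ] (Fin 3 → ℂ)) : Prop :=
  ∀ x y z : Fin 3 → ℂ, br (T x) (T y) (T z) =
    T (br (T x) (T y) z + br (T y) (T z) x + br (T z) (T x) y)

/-!
Writing `D(x, y, z)` for the determinant with rows `x, y, z`, the bracket is `[x, y, z] = D(x, y, z) e₁`.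
For a matrix `A`, `D(Ax, Ay, Az) = det A · D(x, y, z)` and
`D(Ax, Ay, z) + D(Ay, Az, x) + D(Az, Ax, y) = σ₂(A) · D(x, y, z)`, where `σ₂(A)` is the sum of the
principal `2 × 2` minors. Hence if `T e₁ = a e₁`, then `T` is an `𝒪`-operator as soon as
`det T = a σ₂(T)`. For `O₂` the eigenvalues are `a₁₁, λ, -λ`, so `det T = -a₁₁λ² = a₁₁ σ₂(T)`.
-/

namespace Matrix

variable {R : Type*} [CommRing R]

def sumPrincipalMinors₂ (A : Matrix (Fin 3) (Fin 3) R) : R :=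
  (A 0 0 * A 1 1 - A 0 1 * A 1 0) + (A 0 0 * A 2 2 - A 0 2 * A 2 0)
    + (A 1 1 * A 2 2 - A 1 2 * A 2 1)

theorem det_of_mulVec (A : Matrix (Fin 3) (Fin 3) R) (x y z : Fin 3 → R) :
    (of ![A *ᵥ x, A *ᵥ y, A *ᵥ z]).det = A.det * (of ![x, y, z]).det := by
  have hrows : of ![A *ᵥ x, A *ᵥ y, A *ᵥ z] = of ![x, y, z] * Aᵀ := by
    ext i j
    fin_cases i <;> simp [mul_apply, mulVec, dotProduct, mul_comm]
  rw [hrows, det_mul, det_transpose, mul_comm]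

theorem det_of_mulVec_cyclic_sum (A : Matrix (Fin 3) (Fin 3) R) (x y z : Fin 3 → R) :
    (of ![A *ᵥ x, A *ᵥ y, z]).det + (of ![A *ᵥ y, A *ᵥ z, x]).det
      + (of ![A *ᵥ z, A *ᵥ x, y]).det = A.sumPrincipalMinors₂ * (of ![x, y, z]).det := by
  simp [det_fin_three, sumPrincipalMinors₂, mulVec, dotProduct, Fin.sum_univ_three]
  ring

theorem det_eq_mul_sumPrincipalMinors₂ {A : Matrix (Fin 3) (Fin 3) R}
    (h₁ : A 1 0 = 0) (h₂ : A 2 0 = 0) (htrace : A.trace = A 0 0) :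
    A.det = A 0 0 * A.sumPrincipalMinors₂ := by
  have h₃ : A 2 2 = -A 1 1 := by
    rw [trace_fin_three] at htrace
    linear_combination htrace
  rw [det_fin_three, sumPrincipalMinors₂, h₁, h₂, h₃]
  ring

end Matrix

open Matrix

theorem e_eq_single (i : Fin 3) : e i = Pi.single i 1 := by
  funext j
  simp [e, Pi.single_apply]

theorem br_eq_det_smul (x y z : Fin 3 → ℂ) : br x y z = (of ![x, y, z]).det • e 0 := by
  funext i
  fin_cases i <;> simp [br, e, det_fin_three]; ring

theorem isOOperator_of_det_eq {T : (Fin 3 → ℂ) →ₗ[ℂ] (Fin 3 → ℂ)} {a : ℂ}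
    (he : T (e 0) = a • e 0)
    (hdet : (LinearMap.toMatrix' T).det = a * (LinearMap.toMatrix' T).sumPrincipalMinors₂) :
    IsOOperator T := by
  intro x y z
  simp only [br_eq_det_smul, ← add_smul, map_smul, he, smul_smul, ← LinearMap.toMatrix'_mulVec,
    det_of_mulVec, det_of_mulVec_cyclic_sum, hdet]
  congr 1
  ring

/-- The linear map with matrix `O₂` is an `𝒪`-operator. -/
theorem O2_is_O_operator (T : (Fin 3 → ℂ) →ₗ[ℂ] (Fin 3 → ℂ))
    (a11 a21 a23 a31 a32 a33 : ℂ)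
    (h1 : T (e 0) = a11 • e 0)
    (h2 : T (e 1) = a21 • e 0 + (-a33) • e 1 + a23 • e 2)
    (h3 : T (e 2) = a31 • e 0 + a32 • e 1 + a33 • e 2) :
    IsOOperator T := by
  have hentry (i j : Fin 3) : LinearMap.toMatrix' T i j = T (e j) i := by
    rw [LinearMap.toMatrix'_apply, e_eq_single]
  refine isOOperator_of_det_eq h1 ?_
  have h00 : LinearMap.toMatrix' T 0 0 = a11 := by simp [hentry, h1, e]
  rw [← h00]
  apply det_eq_mul_sumPrincipalMinors₂ <;> simp [trace_fin_three, hentry, h1, h2, h3, e]
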